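/- arXiv:1812.11510 — 2 statements merged into one kernel-verified Lean document; each statement's English description precedes it below -/
import Mathlib

section
/- In a residuated lattice, for any subset X of A, the filter generated by X equals the intersection of all X-minimal prime filters. -/
/-!
Every filter containing `X` contains `F(X)`, so `F(X)` lies in every `X`-minimal prime filter.
Conversely, if `a ∉ F(X)`, Zorn's lemma gives a filter `P ⊇ F(X)` maximal among filters avoiding
`a`. It is prime: if `x ⊔ y ∈ P` but `x, y ∉ P`, maximality puts `a` into the filters generated by
`P ∪ {x}` and `P ∪ {y}`, i.e. `g ⊙ xᵐ ≤ a` and `h ⊙ yⁿ ≤ a` for some `g, h ∈ P`, and then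
`(x ⊔ y)ᵐ⁺ⁿ ≤ xᵐ ⊔ yⁿ` gives `g ⊙ h ⊙ (x ⊔ y)ᵐ⁺ⁿ ≤ a`, so `a ∈ P`. Since the intersection of a chain
of prime filters is prime, Zorn's lemma again yields an `X`-minimal prime filter inside `P`, and it
avoids `a`.
-/

universe u

class ResiduatedLattice (A : Type u) extends Lattice A, BoundedOrder A where
  mul : A → A → A
  himp : A → A → A
  mul_comm : ∀ x y : A, mul x y = mul y x
  mul_assoc : ∀ x y z : A, mul (mul x y) z = mul x (mul y z)
  mul_top : ∀ x : A, mul x ⊤ = x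
  adjoint : ∀ x y z : A, mul x y ≤ z ↔ x ≤ himp y z

namespace RL

variable {A : Type u} [ResiduatedLattice A]

/-- A filter: a nonempty subset closed under the monoid operation `⊙` and closed
under joins with arbitrary elements. -/
def IsFilter (F : Set A) : Prop :=
  F.Nonempty ∧ (∀ x ∈ F, ∀ y ∈ F, ResiduatedLattice.mul x y ∈ F) ∧
    (∀ x ∈ F, ∀ y : A, x ⊔ y ∈ F)

/-- A prime filter: a proper filter such that `x ⊔ y ∈ P` implies `x ∈ P` or `y ∈ P`. -/
def IsPrime (P : Set A) : Prop :=
  IsFilter P ∧ P ≠ Set.univ ∧ ∀ x y : A, x ⊔ y ∈ P → x ∈ P ∨ y ∈ P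

/-- The filter generated by a subset `X`. -/
def Fgen (X : Set A) : Set A := ⋂₀ {G : Set A | IsFilter G ∧ X ⊆ G}

/-- An `X`-minimal prime filter: a minimal element of the set of prime filters containing `X`. -/
def MinPrimeOver (X : Set A) (P : Set A) : Prop :=
  IsPrime P ∧ X ⊆ P ∧ ∀ Q : Set A, IsPrime Q → X ⊆ Q → Q ⊆ P → Q = P

/-- A minimal prime filter. -/
def MinPrime (P : Set A) : Prop :=
  IsPrime P ∧ ∀ Q : Set A, IsPrime Q → Q ⊆ P → Q = P

/-- The coannihilator of `X` belonging to `F`. -/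
def coann (F : Set A) (X : Set A) : Set A := {a : A | ∀ x ∈ X, x ⊔ a ∈ F}

/-- `X^⊥ = {a | x ⊔ a = ⊤ for all x ∈ X}`. -/
def perp (X : Set A) : Set A := {a : A | ∀ x ∈ X, x ⊔ a = ⊤}

/-- `D_F(P) = {a | (F : a) ⊄ P}`. -/
def DF (F P : Set A) : Set A := {a : A | ¬ coann F {a} ⊆ P}

/-- A `∨`-closed subset: nonempty and closed under joins. -/
def VClosed (C : Set A) : Prop := C.Nonempty ∧ ∀ x ∈ C, ∀ y ∈ C, x ⊔ y ∈ C

end RL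

namespace RL

variable {A : Type u} [ResiduatedLattice A]

/- The monoid reduct `(A, ⊙, ⊤)`, so that Mathlib's lemmas on (ordered) monoids and their powers
apply. -/
instance commMonoid : CommMonoid A where
  mul := ResiduatedLattice.mul
  one := ⊤
  mul_assoc := ResiduatedLattice.mul_assoc
  one_mul x := (ResiduatedLattice.mul_comm _ _).trans (ResiduatedLattice.mul_top x)
  mul_one := ResiduatedLattice.mul_top
  mul_comm := ResiduatedLattice.mul_comm

theorem one_eq_top : (1 : A) = ⊤ := rfl

theorem mul_le_iff_le_himp {x y z : A} : x * y ≤ z ↔ x ≤ ResiduatedLattice.himp y z :=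
  ResiduatedLattice.adjoint x y z

instance isOrderedMonoid : IsOrderedMonoid A where
  mul_le_mul_left _ _ h _ := mul_le_iff_le_himp.2 (h.trans (mul_le_iff_le_himp.1 le_rfl))

theorem mul_le_left (x y : A) : x * y ≤ x := mul_le_of_le_one_right' le_top

theorem mul_le_right (x y : A) : x * y ≤ y := mul_le_of_le_one_left' le_top

protected theorem sup_mul (x y z : A) : (x ⊔ y) * z = x * z ⊔ y * z :=
  le_antisymm
    (mul_le_iff_le_himp.2 <| sup_le (mul_le_iff_le_himp.1 le_sup_left)
      (mul_le_iff_le_himp.1 le_sup_right))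
    (sup_le (mul_le_mul_left le_sup_left z) (mul_le_mul_left le_sup_right z))

protected theorem mul_sup (x y z : A) : x * (y ⊔ z) = x * y ⊔ x * z := by
  simp only [mul_comm x, RL.sup_mul]

theorem sup_pow_add_le (x y : A) : ∀ m n : ℕ, (x ⊔ y) ^ (m + n) ≤ x ^ m ⊔ y ^ n
  | 0, _ => by simp [one_eq_top]
  | _, 0 => by simp [one_eq_top]
  | m + 1, n + 1 => by
    have hx := sup_pow_add_le x y m (n + 1)
    have hy := sup_pow_add_le x y (m + 1) n
    calc (x ⊔ y) ^ (m + 1 + (n + 1))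
        = x * (x ⊔ y) ^ (m + (n + 1)) ⊔ y * (x ⊔ y) ^ (m + 1 + n) := by
          rw [show m + 1 + (n + 1) = m + (n + 1) + 1 by omega, pow_succ', RL.sup_mul,
            show m + 1 + n = m + (n + 1) by omega]
      _ ≤ x * (x ^ m ⊔ y ^ (n + 1)) ⊔ y * (x ^ (m + 1) ⊔ y ^ n) :=
          sup_le_sup (mul_le_mul_right hx x) (mul_le_mul_right hy y)
      _ = x ^ (m + 1) ⊔ x * y ^ (n + 1) ⊔ (y * x ^ (m + 1) ⊔ y ^ (n + 1)) := by
          rw [RL.mul_sup, RL.mul_sup, pow_succ', pow_succ']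
      _ ≤ x ^ (m + 1) ⊔ y ^ (n + 1) :=
          sup_le (sup_le le_sup_left ((mul_le_right _ _).trans le_sup_right))
            (sup_le ((mul_le_right _ _).trans le_sup_left) le_sup_right)
termination_by m n => m + n

section Filters

variable {F G : Set A} {x y : A}

theorem IsFilter.top_mem (hF : IsFilter F) : ⊤ ∈ F := by
  obtain ⟨⟨x, hx⟩, -, hsup⟩ := hF
  simpa using hsup x hx ⊤

theorem IsFilter.mem_of_le (hF : IsFilter F) (hx : x ∈ F) (hxy : x ≤ y) : y ∈ F := by
  simpa [sup_eq_right.2 hxy] using hF.2.2 x hx y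

theorem IsFilter.mul_mem (hF : IsFilter F) (hx : x ∈ F) (hy : y ∈ F) : x * y ∈ F :=
  hF.2.1 x hx y hy

theorem IsFilter.pow_mem (hF : IsFilter F) (hx : x ∈ F) : ∀ n : ℕ, x ^ n ∈ F
  | 0 => hF.top_mem
  | n + 1 => pow_succ' x n ▸ hF.mul_mem hx (hF.pow_mem hx n)

theorem isFilter_sInter {S : Set (Set A)} (hS : ∀ G ∈ S, IsFilter G) : IsFilter (⋂₀ S) :=
  ⟨⟨⊤, fun G hG => (hS G hG).top_mem⟩,
    fun _ hx _ hy G hG => (hS G hG).mul_mem (hx G hG) (hy G hG),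
    fun _ hx y G hG => (hS G hG).2.2 _ (hx G hG) y⟩

theorem isFilter_sUnion_of_isChain {c : Set (Set A)} (hc : IsChain (· ⊆ ·) c) (hne : c.Nonempty)
    (hcF : ∀ G ∈ c, IsFilter G) : IsFilter (⋃₀ c) := by
  obtain ⟨G, hG⟩ := hne
  refine ⟨⟨⊤, G, hG, (hcF G hG).top_mem⟩, ?_, ?_⟩
  · rintro x ⟨G₁, hG₁, hx⟩ y ⟨G₂, hG₂, hy⟩
    rcases hc.total hG₁ hG₂ with h | h
    · exact ⟨G₂, hG₂, (hcF G₂ hG₂).mul_mem (h hx) hy⟩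
    · exact ⟨G₁, hG₁, (hcF G₁ hG₁).mul_mem hx (h hy)⟩
  · rintro x ⟨G₁, hG₁, hx⟩ y
    exact ⟨G₁, hG₁, (hcF G₁ hG₁).2.2 x hx y⟩

theorem isFilter_fgen (X : Set A) : IsFilter (Fgen X) :=
  isFilter_sInter fun _ hG => hG.1

theorem subset_fgen (X : Set A) : X ⊆ Fgen X :=
  fun _ hx _ hG => hG.2 hx

theorem fgen_subset {X : Set A} (hG : IsFilter G) (hXG : X ⊆ G) : Fgen X ⊆ G :=
  Set.sInter_subset_of_mem ⟨hG, hXG⟩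

/-- The filter generated by `F ∪ {x}`, when `F` is a filter. -/
def adjoin (F : Set A) (x : A) : Set A := {z | ∃ f ∈ F, ∃ n : ℕ, f * x ^ n ≤ z}

theorem isFilter_adjoin (hF : IsFilter F) (x : A) : IsFilter (adjoin F x) := by
  refine ⟨⟨⊤, ⊤, hF.top_mem, 0, le_top⟩, ?_, ?_⟩
  · rintro y ⟨f, hf, m, hm⟩ z ⟨g, hg, n, hn⟩
    refine ⟨f * g, hF.mul_mem hf hg, m + n, ?_⟩
    calc f * g * x ^ (m + n) = f * x ^ m * (g * x ^ n) := by rw [pow_add]; ac_rfl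
      _ ≤ y * z := mul_le_mul' hm hn
  · rintro y ⟨f, hf, n, hn⟩ z
    exact ⟨f, hf, n, hn.trans le_sup_left⟩

theorem subset_adjoin (x : A) : F ⊆ adjoin F x :=
  fun f hf => ⟨f, hf, 0, by simp⟩

theorem mem_adjoin_self (hF : IsFilter F) (x : A) : x ∈ adjoin F x :=
  ⟨⊤, hF.top_mem, 1, by simp [← one_eq_top]⟩

end Filters

section PrimeFilters

variable {X P : Set A}

theorem isPrime_of_maximal {a : A} (hP : Maximal (fun G => IsFilter G ∧ a ∉ G) P) : IsPrime P := by
  have hPF : IsFilter P := hP.1.1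
  have haP : a ∉ P := hP.1.2
  refine ⟨hPF, fun h => haP (h ▸ Set.mem_univ a), fun x y hxy => ?_⟩
  by_contra! hxy'
  have mem_adjoin : ∀ z ∉ P, a ∈ adjoin P z := fun z hz => by
    by_contra h
    exact hz (hP.2 ⟨isFilter_adjoin hPF z, h⟩ (subset_adjoin z) (mem_adjoin_self hPF z))
  obtain ⟨g, hg, m, hm⟩ := mem_adjoin x hxy'.1
  obtain ⟨h, hh, n, hn⟩ := mem_adjoin y hxy'.2
  refine haP (hPF.mem_of_le (hPF.mul_mem (hPF.mul_mem hg hh) (hPF.pow_mem hxy (m + n))) ?_)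
  calc g * h * (x ⊔ y) ^ (m + n) ≤ g * h * (x ^ m ⊔ y ^ n) :=
        mul_le_mul_right (sup_pow_add_le x y m n) _
    _ = g * h * x ^ m ⊔ g * h * y ^ n := RL.mul_sup _ _ _
    _ ≤ a := sup_le ((mul_le_mul_left (mul_le_left g h) _).trans hm)
        ((mul_le_mul_left (mul_le_right g h) _).trans hn)

theorem exists_isPrime_of_notMem {F : Set A} (hF : IsFilter F) {a : A} (ha : a ∉ F) :
    ∃ P, IsPrime P ∧ F ⊆ P ∧ a ∉ P := by
  obtain ⟨P, hFP, hP⟩ := zorn_subset_nonempty {G | IsFilter G ∧ a ∉ G}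
    (fun c hcS hc hne => ⟨⋃₀ c,
      ⟨isFilter_sUnion_of_isChain hc hne fun G hG => (hcS hG).1,
        fun ⟨G, hG, haG⟩ => (hcS hG).2 haG⟩,
      fun _ => Set.subset_sUnion_of_mem⟩) F ⟨hF, ha⟩
  exact ⟨P, isPrime_of_maximal hP, hFP, hP.1.2⟩

theorem isPrime_sInter_of_isChain {c : Set (Set A)} (hc : IsChain (· ⊆ ·) c) (hne : c.Nonempty)
    (hcP : ∀ P ∈ c, IsPrime P) : IsPrime (⋂₀ c) := by
  obtain ⟨P, hP⟩ := hne
  refine ⟨isFilter_sInter fun Q hQ => (hcP Q hQ).1, fun h => (hcP P hP).2.1 ?_, ?_⟩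
  · exact Set.eq_univ_of_univ_subset (h ▸ Set.sInter_subset_of_mem hP)
  · intro x y hxy
    by_contra! hxy'
    simp only [Set.mem_sInter, not_forall] at hxy'
    obtain ⟨⟨Q₁, hQ₁, hx⟩, ⟨Q₂, hQ₂, hy⟩⟩ := hxy'
    rcases hc.total hQ₁ hQ₂ with h | h
    · exact ((hcP Q₁ hQ₁).2.2 x y (hxy Q₁ hQ₁)).elim hx fun hy₁ => hy (h hy₁)
    · exact ((hcP Q₂ hQ₂).2.2 x y (hxy Q₂ hQ₂)).elim (fun hx₂ => hx (h hx₂)) hy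

theorem minPrimeOver_of_minimal (hP : Minimal (fun Q => IsPrime Q ∧ X ⊆ Q) P) :
    MinPrimeOver X P :=
  ⟨hP.1.1, hP.1.2, fun _ hQ hXQ hQP => hQP.antisymm (hP.2 ⟨hQ, hXQ⟩ hQP)⟩

theorem exists_minPrimeOver_subset (hP : IsPrime P) (hXP : X ⊆ P) :
    ∃ Q, MinPrimeOver X Q ∧ Q ⊆ P := by
  obtain ⟨Q, hQP, hQ⟩ := zorn_superset_nonempty {Q | IsPrime Q ∧ X ⊆ Q}
    (fun c hcS hc hne => ⟨⋂₀ c,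
      ⟨isPrime_sInter_of_isChain hc hne fun Q hQ => (hcS hQ).1,
        Set.subset_sInter fun _ hQ => (hcS hQ).2⟩,
      fun _ => Set.sInter_subset_of_mem⟩) P ⟨hP, hXP⟩
  exact ⟨Q, minPrimeOver_of_minimal hQ, hQP⟩

end PrimeFilters

end RL

theorem fgen_eq_sInter_minimal_primes {A : Type u} [ResiduatedLattice A] (X : Set A) :
    RL.Fgen X = ⋂₀ {m : Set A | RL.MinPrimeOver X m} := by
  refine (Set.subset_sInter fun Q hQ => RL.fgen_subset hQ.1.1 hQ.2.1).antisymm fun a ha => ?_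
  by_contra haX
  obtain ⟨P, hP, hXP, haP⟩ := RL.exists_isPrime_of_notMem (RL.isFilter_fgen X) haX
  obtain ⟨Q, hQ, hQP⟩ := RL.exists_minPrimeOver_subset hP ((RL.subset_fgen X).trans hXP)
  exact haP (hQP (ha Q hQ))
end

section
/- In a MTL algebra (residuated lattice satisfying (x → y) ∨ (y → x) = 1), a collection Π of prime filters is {1}-closed (for distinct P1, P2 ∈ Π there exist a1 ∉ P1, a2 ∉ P2 with a1 ∨ a2 = 1) if and only if Π is an antichain. -/
universe u

/-! If `P₁ ⊆ P₂` are prime, any `a₁ ⊔ a₂ = ⊤` lies in `P₁`, so one of the `aᵢ` lies in `P₂`;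
hence a `{1}`-closed family is an antichain. Conversely, for incomparable filters pick
`x ∈ P₁ \ P₂` and `y ∈ P₂ \ P₁`: prelinearity gives `(x → y) ⊔ (y → x) = ⊤`, and modus ponens
keeps `x → y` out of `P₁` and `y → x` out of `P₂`. -/

namespace RL

open ResiduatedLattice (mul himp adjoint)

variable {A : Type u} [ResiduatedLattice A]

theorem himp_mul_le (x y : A) : mul (himp x y) x ≤ y :=
  (adjoint _ _ _).mpr le_rfl

namespace IsFilter

variable {F : Set A}

theorem mem_of_le_s14 (hF : IsFilter F) {a b : A} (ha : a ∈ F) (hab : a ≤ b) : b ∈ F := by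
  simpa only [sup_eq_right.mpr hab] using hF.2.2 a ha b

theorem top_mem_s14 (hF : IsFilter F) : (⊤ : A) ∈ F :=
  hF.mem_of_le_s14 hF.1.some_mem le_top

theorem mem_of_himp_mem (hF : IsFilter F) {x y : A} (hxy : himp x y ∈ F) (hx : x ∈ F) : y ∈ F :=
  hF.mem_of_le_s14 (hF.2.1 _ hxy _ hx) (himp_mul_le x y)

end IsFilter

theorem IsPrime.mem_or_mem_of_sup_eq_top {P : Set A} (hP : IsPrime P) {a b : A}
    (hab : a ⊔ b = ⊤) : a ∈ P ∨ b ∈ P :=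
  hP.2.2 a b (hab ▸ hP.1.top_mem_s14)

theorem IsPrime.not_subset_of_sup_eq_top {P₁ P₂ : Set A} (hP₁ : IsPrime P₁) {a₁ a₂ : A}
    (ha₁ : a₁ ∉ P₁) (ha₂ : a₂ ∉ P₂) (hsup : a₁ ⊔ a₂ = ⊤) : ¬ P₁ ⊆ P₂ := fun hsub =>
  (hP₁.mem_or_mem_of_sup_eq_top hsup).elim ha₁ fun h => ha₂ (hsub h)

theorem exists_sup_eq_top_of_not_subset
    (hpl : ∀ x y : A, himp x y ⊔ himp y x = ⊤) {P₁ P₂ : Set A}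
    (hP₁ : IsFilter P₁) (hP₂ : IsFilter P₂) (h₁₂ : ¬ P₁ ⊆ P₂) (h₂₁ : ¬ P₂ ⊆ P₁) :
    ∃ a₁ ∉ P₁, ∃ a₂ ∉ P₂, a₁ ⊔ a₂ = ⊤ := by
  obtain ⟨x, hx₁, hx₂⟩ := Set.not_subset.mp h₁₂
  obtain ⟨y, hy₂, hy₁⟩ := Set.not_subset.mp h₂₁
  exact ⟨himp x y, fun h => hy₁ (hP₁.mem_of_himp_mem h hx₁),
    himp y x, fun h => hx₂ (hP₂.mem_of_himp_mem h hy₂), hpl x y⟩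

end RL

theorem mtl_one_closed_iff_antichain {A : Type u} [ResiduatedLattice A]
    (hpl : ∀ x y : A, ResiduatedLattice.himp x y ⊔ ResiduatedLattice.himp y x = ⊤)
    (𝔓 : Set (Set A)) (h𝔓 : ∀ P ∈ 𝔓, RL.IsPrime P) :
    (∀ P1 ∈ 𝔓, ∀ P2 ∈ 𝔓, P1 ≠ P2 → ∃ a1 ∉ P1, ∃ a2 ∉ P2, a1 ⊔ a2 = (⊤ : A)) ↔
      IsAntichain (· ⊆ ·) 𝔓 := by
  constructor
  · intro h P1 hP1 P2 hP2 hne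
    obtain ⟨a1, ha1, a2, ha2, hsup⟩ := h P1 hP1 P2 hP2 hne
    exact (h𝔓 P1 hP1).not_subset_of_sup_eq_top ha1 ha2 hsup
  · intro hac P1 hP1 P2 hP2 hne
    exact RL.exists_sup_eq_top_of_not_subset hpl (h𝔓 P1 hP1).1 (h𝔓 P2 hP2).1
      (hac hP1 hP2 hne) (hac hP2 hP1 hne.symm)
end
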